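/- arXiv:2306.05631 — 2 statements merged into one kernel-verified Lean document; each statement's English description precedes it below -/
import Mathlib

section
/- Let G be a finite group of order v containing a regular Paley-type partial difference set D' with parameters (v, (v-1)/2, (v-5)/4, (v-1)/4). Define P = D' and N = G \ (P ∪ {1_G}). Then D = P - N is a (v, v-1, -1)-signed difference set in G. -/
open Finset

noncomputable def eltM {G : Type*} [Group G] (S : Finset G) : MonoidAlgebra ℤ G :=
  ∑ s ∈ S, MonoidAlgebra.single s 1

noncomputable def starM {G : Type*} [Group G] [Fintype G]
    (A : MonoidAlgebra ℤ G) : MonoidAlgebra ℤ G :=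
  ∑ g : G, MonoidAlgebra.single g⁻¹ (A.coeff g)

section Aux
variable {G : Type*} [Group G] [Fintype G] [DecidableEq G]

lemma eltM_apply (S : Finset G) (g : G) : (eltM S).coeff g = if g ∈ S then 1 else 0 := by
  classical
  rw [eltM, MonoidAlgebra.coeff_sum, Finset.sum_apply']
  simp [Finsupp.single_apply, eq_comm]

lemma starM_eltM (S : Finset G) :
    starM (eltM S) = ∑ s ∈ S, MonoidAlgebra.single s⁻¹ (1 : ℤ) := by
  classical
  rw [starM]
  rw [← Finset.sum_filter_add_sum_filter_not univ (· ∈ S)]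
  have h1 : ∀ g ∈ univ.filter (· ∈ S), MonoidAlgebra.single g⁻¹ ((eltM S).coeff g)
      = MonoidAlgebra.single g⁻¹ (1 : ℤ) := by
    intro g hg; simp only [mem_filter] at hg; rw [eltM_apply, if_pos hg.2]
  have h2 : ∀ g ∈ univ.filter (¬ · ∈ S), MonoidAlgebra.single g⁻¹ ((eltM S).coeff g)
      = 0 := by
    intro g hg; simp only [mem_filter] at hg; rw [eltM_apply, if_neg hg.2]; simp
  rw [Finset.sum_congr rfl h1, Finset.sum_congr rfl h2, Finset.sum_const_zero, add_zero]
  apply Finset.sum_congr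
  · ext g; simp
  · intros; rfl

lemma starM_sub (A B : MonoidAlgebra ℤ G) : starM (A - B) = starM A - starM B := by
  rw [starM, starM, starM, ← Finset.sum_sub_distrib]
  apply Finset.sum_congr rfl
  intro g _
  rw [MonoidAlgebra.coeff_sub, Finsupp.sub_apply]
  exact MonoidAlgebra.single_sub g⁻¹ (A.coeff g) (B.coeff g)

lemma starM_symm (S : Finset G) (h : ∀ d ∈ S, d⁻¹ ∈ S) : starM (eltM S) = eltM S := by
  rw [starM_eltM, eltM]
  exact Finset.sum_nbij' (fun s => s⁻¹) (fun s => s⁻¹) (fun a ha => h a ha)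
    (fun a ha => h a ha) (by simp) (by simp) (fun a _ => rfl)

lemma eltM_mul_univ (S : Finset G) :
    eltM S * eltM (univ : Finset G) = (S.card : ℤ) • eltM (univ : Finset G) := by
  classical
  rw [eltM, eltM, Finset.sum_mul]
  have : ∀ s ∈ S, (MonoidAlgebra.single s (1:ℤ)) * ∑ t : G, MonoidAlgebra.single t (1:ℤ)
      = ∑ t : G, MonoidAlgebra.single t (1:ℤ) := by
    intro s _
    rw [Finset.mul_sum]
    refine Finset.sum_nbij' (fun t => s * t) (fun t => s⁻¹ * t) (by simp) (by simp)
      (by simp) (by simp) ?_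
    intro t _
    rw [MonoidAlgebra.single_mul_single, one_mul]
  rw [Finset.sum_congr rfl this, Finset.sum_const]
  simp [eltM]

lemma univ_mul_eltM (S : Finset G) :
    eltM (univ : Finset G) * eltM S = (S.card : ℤ) • eltM (univ : Finset G) := by
  classical
  rw [eltM, eltM, Finset.mul_sum]
  have : ∀ s ∈ S, (∑ t : G, MonoidAlgebra.single t (1:ℤ)) * MonoidAlgebra.single s (1:ℤ)
      = ∑ t : G, MonoidAlgebra.single t (1:ℤ) := by
    intro s _
    rw [Finset.sum_mul]
    refine Finset.sum_nbij' (fun t => t * s) (fun t => t * s⁻¹) (by simp) (by simp)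
      (by simp) (by simp) ?_
    intro t _
    rw [MonoidAlgebra.single_mul_single, one_mul]
  rw [Finset.sum_congr rfl this, Finset.sum_const]
  simp [eltM]

end Aux

/-- from a regular Paley-type partial difference set `D'`, with
parameters `(v, (v-1)/2, (v-5)/4, (v-1)/4)`, the signed set `D = P - N` with
`P = D'` and `N = G \ (P ∪ {1})` is a `(v, v-1, -1)`-signed difference set. -/
theorem sds_from_paley_pds {G : Type*} [Group G] [Fintype G] [DecidableEq G]
    (D' : Finset G) (k : ℕ) (lam mu : ℤ)
    (hk : 2 * (k : ℤ) = (Fintype.card G : ℤ) - 1) (hkcard : k = D'.card)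
    (hlam : 4 * lam = (Fintype.card G : ℤ) - 5)
    (hmu : 4 * mu = (Fintype.card G : ℤ) - 1)
    (hreg1 : (1 : G) ∉ D') (hreg2 : ∀ d ∈ D', d⁻¹ ∈ D')
    (hPDS : eltM D' * starM (eltM D') =
      lam • eltM D' +
        mu • (eltM (univ : Finset G) - eltM D' - MonoidAlgebra.single 1 1) +
        (k : ℤ) • MonoidAlgebra.single 1 1)
    (P N : Finset G) (hP : P = D') (hN : N = univ \ (P ∪ {1})) :
    (eltM P - eltM N) * starM (eltM P - eltM N) =
      (-1 : ℤ) • (eltM (univ : Finset G) - MonoidAlgebra.single 1 1) +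
        ((Fintype.card G : ℤ) - 1) • MonoidAlgebra.single 1 1 := by
  classical
  subst hN
  rw [hP] at *
  clear hP P
  set A := eltM D' with hA
  set U := eltM (univ : Finset G) with hU
  have hone : MonoidAlgebra.single (1:G) (1:ℤ) = 1 := rfl
  -- eltM N = U - A - 1
  have hsub : D' ∪ {1} ⊆ (univ : Finset G) := subset_univ _
  have hNval : eltM (univ \ (D' ∪ {1})) = U - A - 1 := by
    have h1 : eltM (univ \ (D' ∪ {1})) + eltM (D' ∪ {1}) = U := by
      rw [eltM, eltM, Finset.sum_sdiff hsub]
      rfl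
    have h2 : eltM (D' ∪ {1}) = A + 1 := by
      rw [eltM, Finset.sum_union (by simp [Finset.disjoint_singleton_right, hreg1]),
        Finset.sum_singleton, hone]
      rfl
    rw [h2] at h1
    linear_combination (norm := abel) h1
  have hstarA : starM A = A := starM_symm D' hreg2
  rw [hone] at hPDS ⊢
  rw [hstarA] at hPDS
  have hNsymm : ∀ d ∈ (univ : Finset G) \ (D' ∪ {1}), d⁻¹ ∈ (univ : Finset G) \ (D' ∪ {1}) := by
    intro d hd
    simp only [Finset.mem_sdiff, Finset.mem_union, Finset.mem_singleton, Finset.mem_univ,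
      true_and, not_or] at hd ⊢
    constructor
    · intro h
      exact hd.1 (by simpa using hreg2 _ h)
    · intro h
      exact hd.2 (by simpa using congrArg (·⁻¹) h)
  have hstarD : starM (A - eltM (univ \ (D' ∪ {1}))) = A - eltM (univ \ (D' ∪ {1})) := by
    rw [starM_sub, hstarA, starM_symm _ hNsymm]
  rw [hstarD, hNval]
  have hD : A - (U - A - 1) = (2:ℤ) • A + 1 - U := by
    abel
  rw [hD]
  have hAU : A * U = (k:ℤ) • U := by
    rw [hA, hU, eltM_mul_univ, hkcard]
  have hUA : U * A = (k:ℤ) • U := by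
    rw [hA, hU, univ_mul_eltM, hkcard]
  have hUU : U * U = (Fintype.card G : ℤ) • U := by
    rw [hU, univ_mul_eltM, Finset.card_univ]
  have expand : ((2:ℤ) • A + 1 - U) * ((2:ℤ) • A + 1 - U)
      = (4:ℤ) • (A * A) + (4:ℤ) • A + 1 - (2:ℤ) • U - (2:ℤ) • (A * U)
        - (2:ℤ) • (U * A) + U * U := by
    simp only [mul_sub, sub_mul, mul_add, add_mul, smul_mul_assoc, mul_smul_comm,
      one_mul, mul_one, smul_smul]
    module
  rw [expand, hPDS, hAU, hUA, hUU]
  match_scalars <;> linarith [hk, hlam, hmu]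
end

section
/- Let q be an odd prime power with q ≡ 1 (mod 4), and let G = (F_q, +). Let P be the set of nonzero squares in F_q and N = F_q \ (P ∪ {0}). Then D = P - N is a (q, q-1, -1)-signed difference set in G; equivalently, D D^{(-1)} = -(G - 0) + (q-1)·0 in Z[G]. -/
open Finset

noncomputable def eltA {H : Type*} [AddGroup H] (S : Finset H) : AddMonoidAlgebra ℤ H :=
  ∑ s ∈ S, AddMonoidAlgebra.single s 1

noncomputable def starA {H : Type*} [AddGroup H] [Fintype H]
    (A : AddMonoidAlgebra ℤ H) : AddMonoidAlgebra ℤ H :=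
  ∑ h : H, AddMonoidAlgebra.single (-h) (A.coeff h)

section aux

variable {F : Type*} [Field F] [Fintype F] [DecidableEq F]

lemma sum_single_apply (c : F → ℤ) (a : F) :
    (∑ x : F, AddMonoidAlgebra.single x (c x)).coeff a = c a := by
  classical
  rw [AddMonoidAlgebra.coeff_sum, Finsupp.finset_sum_apply]
  simp [Finsupp.single_apply]

lemma eltA_apply (S : Finset F) (a : F) :
    (eltA S).coeff a = if a ∈ S then 1 else 0 := by
  classical
  unfold eltA
  rw [AddMonoidAlgebra.coeff_sum, Finsupp.finset_sum_apply]
  simp [Finsupp.single_apply, Finset.sum_ite_eq]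

lemma quadraticChar_inv_self (hF : ringChar F ≠ 2) :
    (quadraticChar F)⁻¹ = quadraticChar F := by
  have h : quadraticChar F * quadraticChar F = 1 := by
    apply MulChar.ext
    intro a
    rw [MulChar.mul_apply, MulChar.one_apply_coe]
    have := quadraticChar_sq_one (a := (a : F)) (a.ne_zero)
    rwa [sq] at this
  exact inv_eq_of_mul_eq_one_left h

lemma key_sum (hF : ringChar F ≠ 2) (hneg : quadraticChar F (-1) = 1)
    {g : F} (hg : g ≠ 0) :
    ∑ x : F, quadraticChar F x * quadraticChar F (g - x) = -1 := by
  classical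
  set χ := quadraticChar F with hχ
  have h1 : ∑ x : F, χ x * χ (g - x) = ∑ t : F, χ (g * t) * χ (g - g * t) := by
    exact (Fintype.sum_equiv (Equiv.mulLeft₀ g hg) _ _ (fun t => rfl)).symm
  have h2 : ∀ t : F, χ (g * t) * χ (g - g * t) = χ t * χ (1 - t) := by
    intro t
    have : g - g * t = g * (1 - t) := by ring
    rw [this, map_mul, map_mul]
    have hgg : χ g * χ g = 1 := by
      have := quadraticChar_sq_one (a := g) hg
      rwa [sq] at this
    calc χ g * χ t * (χ g * χ (1 - t)) = (χ g * χ g) * (χ t * χ (1 - t)) := by ring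
    _ = χ t * χ (1 - t) := by rw [hgg, one_mul]
  have h3 : ∑ t : F, χ t * χ (1 - t) = jacobiSum χ χ := rfl
  have h4 : jacobiSum χ χ = -1 := by
    have := jacobiSum_nontrivial_inv (quadraticChar_ne_one hF)
    rw [quadraticChar_inv_self hF] at this
    rw [this, hneg]
  rw [h1]
  simp_rw [h2]
  rw [h3, h4]

end aux

/-- for an odd prime power `q ≡ 1 (mod 4)`, taking `P` the
nonzero squares of `F_q` and `N = F_q \ (P ∪ {0})`, the signed set `D = P - N`
is a `(q, q-1, -1)`-signed difference set in `(F_q, +)`. -/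
theorem paley_sds_squares {F : Type*} [Field F] [Fintype F] [DecidableEq F]
    (hodd : Odd (Fintype.card F)) (hq : Fintype.card F % 4 = 1)
    (P N : Finset F)
    (hP : P = univ.filter fun x => x ≠ 0 ∧ ∃ y : F, y * y = x)
    (hN : N = univ \ (P ∪ {0})) :
    (eltA P - eltA N) * starA (eltA P - eltA N) =
      (-1 : ℤ) • (eltA (univ : Finset F) - AddMonoidAlgebra.single 0 1) +
        ((Fintype.card F : ℤ) - 1) • AddMonoidAlgebra.single 0 1 := by
  classical
  set χ := quadraticChar F with hχdef
  have hF2 : ringChar F ≠ 2 := by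
    intro h
    have := FiniteField.even_card_iff_char_two.mp h
    omega
  have hneg : χ (-1) = 1 := by
    rw [hχdef, quadraticChar_neg_one hF2, ZMod.χ₄_nat_one_mod_four hq]
  -- D = ∑ x, single x (χ x)
  set D : AddMonoidAlgebra ℤ F := ∑ x : F, AddMonoidAlgebra.single x (χ x) with hDdef
  have hD : eltA P - eltA N = D := by
    apply AddMonoidAlgebra.coeff_injective
    apply Finsupp.ext
    intro a
    rw [AddMonoidAlgebra.coeff_sub, Finsupp.sub_apply, eltA_apply, eltA_apply, hDdef, sum_single_apply]
    by_cases ha : a = 0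
    · subst ha
      have h0P : (0 : F) ∉ P := by simp [hP]
      have h0N : (0 : F) ∉ N := by simp [hN]
      simp [h0P, h0N, hχdef, quadraticChar_zero]
    · by_cases haP : a ∈ P
      · have : χ a = 1 := by
          rw [hP, mem_filter] at haP
          obtain ⟨-, -, y, hy⟩ := haP
          exact (quadraticChar_one_iff_isSquare ha).mpr ⟨y, hy.symm⟩
        have haN : a ∉ N := by simp [hN, haP]
        simp [haP, haN, this]
      · have haN : a ∈ N := by simp [hN, haP, ha]
        have : χ a = -1 := by
          apply quadraticChar_neg_one_iff_not_isSquare.mpr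
          intro ⟨y, hy⟩
          exact haP (by rw [hP]; simp only [mem_filter, mem_univ, true_and]; exact ⟨ha, y, hy.symm⟩)
        simp [haP, haN, this]
  have hstar : starA D = D := by
    unfold starA
    have h1 : ∀ h : F, D.coeff h = χ h := fun h => by rw [hDdef, sum_single_apply]
    simp_rw [h1]
    rw [hDdef]
    refine Fintype.sum_equiv (Equiv.neg F) _ _ (fun h => ?_)
    simp only [Equiv.neg_apply, neg_neg]
    congr 1
    rw [show (-h : F) = -1 * h by ring, map_mul, hneg, one_mul]
  rw [hD, hstar]
  -- compute the product
  have hprod : D * D = ∑ g : F, AddMonoidAlgebra.single g (∑ x : F, χ x * χ (g - x)) := by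
    rw [hDdef, Finset.sum_mul_sum]
    have h1 : ∀ x : F, ∑ y : F,
        AddMonoidAlgebra.single x (χ x) * AddMonoidAlgebra.single y (χ y) =
        ∑ g : F, AddMonoidAlgebra.single g (χ x * χ (g - x)) := by
      intro x
      refine Fintype.sum_equiv (Equiv.addLeft x) _ _ (fun y => ?_)
      rw [AddMonoidAlgebra.single_mul_single, Equiv.coe_addLeft]
      congr 2
      simp
    simp_rw [h1]
    rw [Finset.sum_comm]
    refine Finset.sum_congr rfl (fun g _ => ?_)
    exact (map_sum (AddMonoidAlgebra.singleAddHom g) _ _).symm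
  rw [hprod]
  apply AddMonoidAlgebra.coeff_injective
  apply Finsupp.ext
  intro a
  rw [sum_single_apply]
  rw [AddMonoidAlgebra.coeff_add, AddMonoidAlgebra.coeff_smul, AddMonoidAlgebra.coeff_smul,
    AddMonoidAlgebra.coeff_sub, Finsupp.add_apply, Finsupp.smul_apply, Finsupp.smul_apply, Finsupp.sub_apply,
    eltA_apply, AddMonoidAlgebra.coeff_single, Finsupp.single_apply]
  by_cases ha : a = 0
  · subst ha
    have : ∑ x : F, χ x * χ (0 - x) = (Fintype.card F : ℤ) - 1 := by
      have h1 : ∀ x : F, χ x * χ (0 - x) = if x = 0 then 0 else 1 := by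
        intro x
        by_cases hx : x = 0
        · simp [hx, hχdef, quadraticChar_zero]
        · rw [zero_sub, show (-x : F) = -1 * x by ring, map_mul, hneg, one_mul]
          have := quadraticChar_sq_one (a := x) hx
          rw [sq] at this
          rw [if_neg hx]
          exact this
      simp_rw [h1]
      have h2 : ∑ x : F, (if x = 0 then (0:ℤ) else 1) =
          ∑ x : F, ((1:ℤ) - if x = 0 then 1 else 0) := by
        refine Finset.sum_congr rfl (fun x _ => ?_)
        split <;> ring
      rw [h2, Finset.sum_sub_distrib, Finset.sum_ite_eq' univ (0 : F) (fun _ => (1 : ℤ))]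
      simp [Finset.card_univ]
    rw [this]
    simp
  · rw [key_sum hF2 hneg ha]
    have h0a : ¬ (0 : F) = a := fun h => ha h.symm
    simp [h0a]
end
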